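/- arXiv:1906.03777 — 2 statements merged into one kernel-verified Lean document; each statement's English description precedes it below -/
import Mathlib

section
/- Let P, A, B be real numbers with P > 0, B > 0 and 0 < A^2 < P·B, and set Δ = A^2/(P·B). Consider J(θ, a) = θ·(B − 2aA + a^2 P) − θB/(1 − 2θ a^2 P) + (1/2)·log(1 − 2θ a^2 P), defined for θ < 0 and a ∈ ℝ (note 1 − 2θ a^2 P > 0 automatically when θ < 0). Then sup_{θ < 0, a ∈ ℝ} J(θ, a) = (1/2)·log(1/(1 − Δ)), and the supremum is attained at a = A/P and θ = −(P/2)/(P·B − A^2). -/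
/-!
Write `t = 1 - 2θa²P` and `d = 1 - A²/(PB)`. The rational part of `J` is bounded by
`(1 - t d)/2` through a sum-of-squares identity, and `log t ≤ t d - 1 - log d` is the
tangent-line bound `log x ≤ x - 1` at `x = t d`. Adding the two gives `J ≤ -(1/2) log d`,
and both bounds are tight at `a = A/P`, `θ = -(P/2)/(PB - A²)`, where `t d = 1`.
-/

noncomputable def gmiObjective (P A B θ a : ℝ) : ℝ :=
  θ * (B - 2 * a * A + a ^ 2 * P) - θ * B / (1 - 2 * θ * a ^ 2 * P)
    + (1 / 2) * Real.log (1 - 2 * θ * a ^ 2 * P)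

theorem gmiObjective_rational_part_le {P A B θ a : ℝ} (hPB : 0 < P * B)
    (ht : 0 < 1 - 2 * θ * a ^ 2 * P) :
    θ * (B - 2 * a * A + a ^ 2 * P) - θ * B / (1 - 2 * θ * a ^ 2 * P)
      ≤ (1 - (1 - 2 * θ * a ^ 2 * P) * (1 - A ^ 2 / (P * B))) / 2 := by
  have hP : P ≠ 0 := left_ne_zero_of_mul hPB.ne'
  have hB : B ≠ 0 := right_ne_zero_of_mul hPB.ne'
  set t := 1 - 2 * θ * a ^ 2 * P with ht_def
  -- the square vanishes exactly at the optimizer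
  have sos : (1 - t * (1 - A ^ 2 / (P * B))) / 2 - (θ * (B - 2 * a * A + a ^ 2 * P) - θ * B / t)
      = (A * t + 2 * θ * a * P * B) ^ 2 / (2 * t * (P * B)) := by
    field_simp
    rw [ht_def]
    ring
  have : 0 ≤ (A * t + 2 * θ * a * P * B) ^ 2 / (2 * t * (P * B)) := by positivity
  linarith

theorem gmiObjective_le {P A B θ a : ℝ} (hP : 0 < P) (hAB : A ^ 2 < P * B) (hθ : θ ≤ 0) :
    gmiObjective P A B θ a ≤ (1 / 2) * Real.log (1 / (1 - A ^ 2 / (P * B))) := by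
  have hPB : 0 < P * B := (sq_nonneg A).trans_lt hAB
  have ht : 0 < 1 - 2 * θ * a ^ 2 * P := by
    have : θ * (a ^ 2 * P) ≤ 0 := mul_nonpos_of_nonpos_of_nonneg hθ (by positivity)
    linarith
  have hd : 0 < 1 - A ^ 2 / (P * B) := sub_pos.2 ((div_lt_one hPB).2 hAB)
  have rational := gmiObjective_rational_part_le (A := A) hPB ht
  have tangent := Real.log_le_sub_one_of_pos (mul_pos ht hd)
  rw [Real.log_mul ht.ne' hd.ne'] at tangent
  rw [one_div (1 - _), Real.log_inv]
  unfold gmiObjective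
  linarith

theorem gmiObjective_optimum {P A B : ℝ} (hP : 0 < P) (hAB : A ^ 2 < P * B) :
    gmiObjective P A B (-(P / 2) / (P * B - A ^ 2)) (A / P)
      = (1 / 2) * Real.log (1 / (1 - A ^ 2 / (P * B))) := by
  have hPB : 0 < P * B := (sq_nonneg A).trans_lt hAB
  have hB : B ≠ 0 := right_ne_zero_of_mul hPB.ne'
  have hD : P * B - A ^ 2 ≠ 0 := (sub_pos.2 hAB).ne'
  have hP0 : P ≠ 0 := hP.ne'
  have ht : 1 - 2 * (-(P / 2) / (P * B - A ^ 2)) * (A / P) ^ 2 * P = 1 / (1 - A ^ 2 / (P * B)) := by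
    field_simp
    ring
  have rational : (-(P / 2) / (P * B - A ^ 2)) * (B - 2 * (A / P) * A + (A / P) ^ 2 * P)
      - (-(P / 2) / (P * B - A ^ 2)) * B / (1 / (1 - A ^ 2 / (P * B))) = 0 := by
    field_simp
    ring
  unfold gmiObjective
  rw [ht, rational, zero_add]

theorem stmt0_general (P A B : ℝ) (hP : 0 < P) (hAB : A ^ 2 < P * B) :
    IsGreatest
      {x : ℝ | ∃ θ a : ℝ, θ < 0 ∧
        x = θ * (B - 2 * a * A + a ^ 2 * P) - θ * B / (1 - 2 * θ * a ^ 2 * P)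
          + (1 / 2) * Real.log (1 - 2 * θ * a ^ 2 * P)}
      ((1 / 2) * Real.log (1 / (1 - A ^ 2 / (P * B)))) ∧
    (-(P / 2) / (P * B - A ^ 2)) * (B - 2 * (A / P) * A + (A / P) ^ 2 * P)
        - (-(P / 2) / (P * B - A ^ 2)) * B
            / (1 - 2 * (-(P / 2) / (P * B - A ^ 2)) * (A / P) ^ 2 * P)
        + (1 / 2) * Real.log (1 - 2 * (-(P / 2) / (P * B - A ^ 2)) * (A / P) ^ 2 * P)
      = (1 / 2) * Real.log (1 / (1 - A ^ 2 / (P * B))) := by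
  have optimum := gmiObjective_optimum hP hAB
  have hθ : -(P / 2) / (P * B - A ^ 2) < 0 := div_neg_of_neg_of_pos (by linarith) (sub_pos.2 hAB)
  refine ⟨⟨⟨_, _, hθ, optimum.symm⟩, ?_⟩, optimum⟩
  rintro x ⟨θ, a, hθ, rfl⟩
  exact gmiObjective_le hP hAB hθ.le

/-- The supremum of the GMI objective
`J(θ, a) = θ·(B − 2aA + a²P) − θB/(1 − 2θa²P) + (1/2)·log(1 − 2θa²P)` over `θ < 0` and
`a ∈ ℝ` equals `(1/2)·log(1/(1 − Δ))` with `Δ = A²/(P·B)`, and is attained at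
`a = A/P`, `θ = −(P/2)/(P·B − A²)`. -/
theorem stmt0 (P A B : ℝ) (hP : 0 < P) (hB : 0 < B) (hA : 0 < A ^ 2) (hAB : A ^ 2 < P * B) :
    IsGreatest
      {x : ℝ | ∃ θ a : ℝ, θ < 0 ∧
        x = θ * (B - 2 * a * A + a ^ 2 * P) - θ * B / (1 - 2 * θ * a ^ 2 * P)
          + (1 / 2) * Real.log (1 - 2 * θ * a ^ 2 * P)}
      ((1 / 2) * Real.log (1 / (1 - A ^ 2 / (P * B)))) ∧
    (-(P / 2) / (P * B - A ^ 2)) * (B - 2 * (A / P) * A + (A / P) ^ 2 * P)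
        - (-(P / 2) / (P * B - A ^ 2)) * B
            / (1 - 2 * (-(P / 2) / (P * B - A ^ 2)) * (A / P) ^ 2 * P)
        + (1 / 2) * Real.log (1 - 2 * (-(P / 2) / (P * B - A ^ 2)) * (A / P) ^ 2 * P)
      = (1 / 2) * Real.log (1 / (1 - A ^ 2 / (P * B))) :=
  stmt0_general P A B hP hAB
end

section
/- Let P > 0, h ∈ ℝ^p, let X ~ N(0, P) and Z ~ N(0, I_p) be independent, and define Y_i = sgn(h_i·X + Z_i) ∈ {−1, +1} for i = 1, …, p. Let f be the density of N(0, P) and F the standard normal cumulative distribution function. Then Var(E[X | Y]) = Σ_{y ∈ {−1,+1}^p} ( ∫_{−∞}^{∞} u·f(u)·∏_{i=1}^p F(y_i h_i u) du )^2 / ( ∫_{−∞}^{∞} f(u)·∏_{i=1}^p F(y_i h_i u) du ), where the sum is over all y with strictly positive denominator. -/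
/-!
`E[X | Y]` is measurable for the finite σ-algebra generated by the quantized output, so it is a.s.
the step function whose value on each fiber `{Y = y}` is the average of `X` there; hence its
variance is `∑_y (∫_{Y = y} X)² / P(Y = y) - (E X)²`, and `E X = 0`. By independence of `X` and `Z`,
both fiber integrals are integrals over `u ~ N(0, P)` of the conditional probability
`P(Y = y | X = u) = ∏ᵢ F(yᵢ hᵢ u)`, which factorises over the i.i.d. noise and is read off the
symmetry of `N(0, 1)`.
-/

open MeasureTheory ProbabilityTheory Set

section FinitePartition

variable {Ω ι : Type*} {mΩ : MeasurableSpace Ω} {μ : Measure Ω} {W : Ω → ι} {X : Ω → ℝ}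

noncomputable def fiberAverage (μ : Measure Ω) (W : Ω → ι) (X : Ω → ℝ) (s : ι) : ℝ :=
  (∫ ω in W ⁻¹' {s}, X ω ∂μ) / μ.real (W ⁻¹' {s})

lemma measureReal_mul_fiberAverage [IsFiniteMeasure μ] (s : ι) :
    μ.real (W ⁻¹' {s}) * fiberAverage μ W X s = ∫ ω in W ⁻¹' {s}, X ω ∂μ := by
  by_cases hs : μ.real (W ⁻¹' {s}) = 0
  · rw [hs, zero_mul, Measure.restrict_eq_zero.2 ((measureReal_eq_zero_iff).1 hs),
      integral_zero_measure]
  · exact mul_div_cancel₀ _ hs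

variable [MeasurableSpace ι] [MeasurableSingletonClass ι]

lemma memLp_comp_of_finite [Finite ι] [IsFiniteMeasure μ] (hW : Measurable W) (c : ι → ℝ)
    (p : ENNReal) : MemLp (fun ω => c (W ω)) p μ :=
  MemLp.of_discrete.comp_of_map hW.aemeasurable

lemma setIntegral_fiberAverage_comp [Finite ι] [IsFiniteMeasure μ] (hW : Measurable W) (hX : Integrable X μ)
    (S : Set ι) :
    ∫ ω in W ⁻¹' S, fiberAverage μ W X (W ω) ∂μ = ∫ ω in W ⁻¹' S, X ω ∂μ := by
  have hS : W ⁻¹' S = ⋃ s ∈ S.toFinite.toFinset, W ⁻¹' {s} := by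
    simp
  have hfiber : ∀ s ∈ S.toFinite.toFinset, MeasurableSet (W ⁻¹' {s}) :=
    fun s _ => hW (measurableSet_singleton s)
  have hdisj := pairwiseDisjoint_fiber W (S.toFinite.toFinset : Set ι)
  rw [hS, integral_biUnion_finset _ hfiber hdisj
      fun _ _ => (memLp_comp_of_finite hW _ 1).integrable le_rfl |>.integrableOn,
    integral_biUnion_finset _ hfiber hdisj fun _ _ => hX.integrableOn]
  refine Finset.sum_congr rfl fun s hs => ?_
  rw [setIntegral_congr_fun (hfiber s hs) fun ω (hω : W ω = s) => by rw [hω], setIntegral_const,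
    smul_eq_mul, measureReal_mul_fiberAverage]

lemma condExp_comap_ae_eq_fiberAverage [Finite ι] [IsFiniteMeasure μ] (hW : Measurable W)
    (hX : Integrable X μ) :
    μ[X | MeasurableSpace.comap W inferInstance] =ᵐ[μ] fun ω => fiberAverage μ W X (W ω) := by
  have hgm : Measurable[MeasurableSpace.comap W inferInstance]
      (fun ω => fiberAverage μ W X (W ω)) :=
    (measurable_of_finite (fiberAverage μ W X)).comp (comap_measurable W)
  refine (ae_eq_condExp_of_forall_setIntegral_eq hW.comap_le hX
    (fun _ _ _ => ((memLp_comp_of_finite hW _ 1).integrable le_rfl).integrableOn) ?_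
    hgm.stronglyMeasurable.aestronglyMeasurable).symm
  rintro _ ⟨S, -, rfl⟩ -
  exact setIntegral_fiberAverage_comp hW hX S

lemma variance_condExp_comap_of_finite [Fintype ι] [IsProbabilityMeasure μ] (hW : Measurable W)
    (hX : Integrable X μ) :
    Var[μ[X | MeasurableSpace.comap W inferInstance]; μ]
      = ∑ s, (∫ ω in W ⁻¹' {s}, X ω ∂μ) ^ 2 / μ.real (W ⁻¹' {s}) - (∫ ω, X ω ∂μ) ^ 2 := by
  have hce := condExp_comap_ae_eq_fiberAverage hW hX
  have hmean : ∫ ω, fiberAverage μ W X (W ω) ∂μ = ∫ ω, X ω ∂μ := by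
    rw [← integral_congr_ae hce, integral_condExp hW.comap_le]
  have hsq : ∫ ω, fiberAverage μ W X (W ω) ^ 2 ∂μ
      = ∑ s, (∫ ω in W ⁻¹' {s}, X ω ∂μ) ^ 2 / μ.real (W ⁻¹' {s}) := by
    rw [← integral_map (f := fun s => fiberAverage μ W X s ^ 2) hW.aemeasurable
        (measurable_of_finite _).aestronglyMeasurable,
      integral_fintype Integrable.of_finite]
    refine Finset.sum_congr rfl fun s _ => ?_
    rw [map_measureReal_apply hW (measurableSet_singleton s), smul_eq_mul,
      ← measureReal_mul_fiberAverage (X := X)]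
    by_cases hs : μ.real (W ⁻¹' {s}) = 0
    · simp [hs]
    · field_simp
  rw [variance_congr hce, variance_eq_sub (memLp_comp_of_finite hW _ 2)]
  simp only [Pi.pow_apply]
  rw [hmean, hsq]

end FinitePartition

section Independence

variable {α β : Type*} {mα : MeasurableSpace α} {mβ : MeasurableSpace β}

lemma setIntegral_prod_comp_fst {μ : Measure α} {ν : Measure β} [SFinite μ] [IsFiniteMeasure ν]
    {B : Set (α × β)} (hB : MeasurableSet B) {φ : α → ℝ} (hφ : Integrable φ μ) :
    ∫ q in B, φ q.1 ∂(μ.prod ν) = ∫ x, ν.real (Prod.mk x ⁻¹' B) * φ x ∂μ := by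
  rw [← integral_indicator hB, integral_prod _ ((hφ.comp_fst ν).indicator hB)]
  refine integral_congr_ae (ae_of_all _ fun x => ?_)
  have hslice : (fun z => B.indicator (fun q => φ q.1) (x, z))
      = (Prod.mk x ⁻¹' B).indicator fun _ => φ x := by
    ext z
    by_cases hz : (x, z) ∈ B <;> simp [hz]
  simp only [hslice]
  rw [integral_indicator_const _ (measurable_prodMk_left hB), smul_eq_mul]

lemma setIntegral_comp_fst_of_indepFun {Ω : Type*} {mΩ : MeasurableSpace Ω} {μ : Measure Ω}
    [IsProbabilityMeasure μ] {X : Ω → α} {Z : Ω → β} (hXm : Measurable X) (hZm : Measurable Z)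
    (hXZ : IndepFun X Z μ) {B : Set (α × β)} (hB : MeasurableSet B) {φ : α → ℝ}
    (hφ : Integrable φ (μ.map X)) :
    ∫ ω in (fun ω => (X ω, Z ω)) ⁻¹' B, φ (X ω) ∂μ
      = ∫ x, (μ.map Z).real (Prod.mk x ⁻¹' B) * φ x ∂(μ.map X) := by
  have hmap : μ.map (fun ω => (X ω, Z ω)) = (μ.map X).prod (μ.map Z) :=
    (indepFun_iff_map_prod_eq_prod_map_map hXm.aemeasurable hZm.aemeasurable).1 hXZ
  rw [← setIntegral_prod_comp_fst hB hφ, ← hmap, setIntegral_map hB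
    (hmap ▸ (hφ.comp_fst _).aestronglyMeasurable) (hXm.prodMk hZm).aemeasurable]

end Independence

section GaussianCDF

variable {v : NNReal}

lemma gaussianReal_real_Ici_neg (a : ℝ) :
    (gaussianReal 0 v).real (Ici (-a)) = cdf (gaussianReal 0 v) a := by
  have hneg : Ici (-a) = (fun x => -x) ⁻¹' Iic a := by ext; simp
  rw [cdf_eq_real, hneg, ← map_measureReal_apply measurable_neg measurableSet_Iic,
    gaussianReal_map_neg, neg_zero]

lemma gaussianReal_real_Iio (hv : v ≠ 0) (a : ℝ) :
    (gaussianReal 0 v).real (Iio a) = cdf (gaussianReal 0 v) a := by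
  have := nullSingletonClass_gaussianReal (μ := 0) hv
  rw [cdf_eq_real, measureReal_congr Iio_ae_eq_Iic]

lemma gaussianReal_real_decide_nonneg_add (hv : v ≠ 0) (a : ℝ) (b : Bool) :
    (gaussianReal 0 v).real {t | decide (0 ≤ a + t) = b}
      = cdf (gaussianReal 0 v) ((if b then 1 else -1) * a) := by
  cases b
  · have : {t : ℝ | decide (0 ≤ a + t) = false} = Iio (-a) := by
      ext; simp [lt_neg_iff_add_neg']
    rw [this, gaussianReal_real_Iio hv]
    simp
  · have : {t : ℝ | decide (0 ≤ a + t) = true} = Ici (-a) := by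
      ext; simp [neg_le_iff_add_nonneg']
    rw [this, gaussianReal_real_Ici_neg]
    simp

end GaussianCDF

section Quantizer

variable {ι : Type*}

noncomputable def quantize (h : ι → ℝ) (q : ℝ × (ι → ℝ)) : ι → Bool :=
  fun i => decide (0 ≤ h i * q.1 + q.2 i)

lemma measurable_quantize (h : ι → ℝ) : Measurable (quantize h) := by
  refine measurable_pi_lambda _ fun i => measurable_to_bool ?_
  have : (fun q => quantize h q i) ⁻¹' {true} = {q | 0 ≤ h i * q.1 + q.2 i} := by
    ext; simp [quantize]
  rw [this]
  exact measurableSet_le measurable_const (by fun_prop)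

variable [Fintype ι]

lemma pi_gaussianReal_real_quantize_slice {v : NNReal} (hv : v ≠ 0) (h : ι → ℝ) (u : ℝ)
    (s : ι → Bool) :
    (Measure.pi fun _ : ι => gaussianReal 0 v).real (Prod.mk u ⁻¹' (quantize h ⁻¹' {s}))
      = ∏ i, cdf (gaussianReal 0 v) ((if s i then 1 else -1) * h i * u) := by
  have hslice : Prod.mk u ⁻¹' (quantize h ⁻¹' {s})
      = univ.pi fun i => {t | decide (0 ≤ h i * u + t) = s i} := by
    ext z; simp [quantize, funext_iff]
  rw [hslice, measureReal_def, Measure.pi_pi, ENNReal.toReal_prod]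
  refine Finset.prod_congr rfl fun i _ => ?_
  rw [← measureReal_def, gaussianReal_real_decide_nonneg_add hv, mul_assoc]

lemma setIntegral_quantize_preimage {Ω : Type*} {mΩ : MeasurableSpace Ω} {μ : Measure Ω}
    [IsProbabilityMeasure μ] {X : Ω → ℝ} {Z : Ω → ι → ℝ} (hXm : Measurable X)
    (hZm : Measurable Z) (hXZ : IndepFun X Z μ) {v : NNReal} (hv : v ≠ 0)
    (hZ : μ.map Z = Measure.pi fun _ : ι => gaussianReal 0 v) (h : ι → ℝ) (s : ι → Bool)
    {φ : ℝ → ℝ} (hφ : Integrable φ (μ.map X)) :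
    ∫ ω in (fun ω => quantize h (X ω, Z ω)) ⁻¹' {s}, φ (X ω) ∂μ
      = ∫ u, (∏ i, cdf (gaussianReal 0 v) ((if s i then 1 else -1) * h i * u)) * φ u
          ∂(μ.map X) := by
  rw [show (fun ω => quantize h (X ω, Z ω)) ⁻¹' {s}
      = (fun ω => (X ω, Z ω)) ⁻¹' (quantize h ⁻¹' {s}) from rfl,
    setIntegral_comp_fst_of_indepFun hXm hZm hXZ
    (measurable_quantize h (measurableSet_singleton s)) hφ, hZ]
  simp only [pi_gaussianReal_real_quantize_slice hv]

end Quantizer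

lemma MeasurableSpace.comap_comp_of_injective {α β γ : Type*} [MeasurableSpace β] [Countable β]
    [MeasurableSingletonClass β] [MeasurableSpace γ] [MeasurableSingletonClass γ] {e : β → γ}
    (he : Function.Injective e) (W : α → β) :
    MeasurableSpace.comap (e ∘ W) inferInstance = MeasurableSpace.comap W inferInstance := by
  have he' : MeasurableEmbedding e :=
    ⟨he, measurable_of_countable e, fun s _ => (s.to_countable.image e).measurableSet⟩
  rw [← MeasurableSpace.comap_comp, he'.comap_eq]

lemma gaussianPDFReal_zero_apply (v : NNReal) (x : ℝ) :
    gaussianPDFReal 0 v x = (Real.sqrt (2 * Real.pi * v))⁻¹ * Real.exp (-(x ^ 2) / (2 * v)) := by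
  simp [gaussianPDFReal, neg_div]

lemma cdf_gaussianReal_zero_one (u : ℝ) :
    cdf (gaussianReal 0 1) u
      = ∫ t in Iic u, (Real.sqrt (2 * Real.pi))⁻¹ * Real.exp (-(t ^ 2) / 2) := by
  rw [cdf_eq_real, measureReal_def, gaussianReal_apply_eq_integral _ one_ne_zero,
    ENNReal.toReal_ofReal
      (setIntegral_nonneg measurableSet_Iic fun t _ => gaussianPDFReal_nonneg 0 1 t)]
  simp [gaussianPDFReal_zero_apply]

theorem variance_condExp_comap_quantize {Ω ι : Type*} {mΩ : MeasurableSpace Ω} {μ : Measure Ω}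
    [IsProbabilityMeasure μ] [Fintype ι] [DecidableEq ι] {X : Ω → ℝ} {Z : Ω → ι → ℝ}
    (hXm : Measurable X) (hZm : Measurable Z) (hXZ : IndepFun X Z μ) {v w : NNReal} (hv : v ≠ 0) (hw : w ≠ 0)
    (hX : μ.map X = gaussianReal 0 v) (hZ : μ.map Z = Measure.pi fun _ : ι => gaussianReal 0 w)
    (h : ι → ℝ) :
    Var[μ[X | MeasurableSpace.comap (fun ω => quantize h (X ω, Z ω)) inferInstance]; μ]
      = ∑ s ∈ Finset.univ.filter (fun s : ι → Bool =>
          0 < ∫ u, gaussianPDFReal 0 v u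
            * ∏ i, cdf (gaussianReal 0 w) ((if s i then 1 else -1) * h i * u)),
        (∫ u, u * gaussianPDFReal 0 v u
            * ∏ i, cdf (gaussianReal 0 w) ((if s i then 1 else -1) * h i * u)) ^ 2
          / ∫ u, gaussianPDFReal 0 v u
            * ∏ i, cdf (gaussianReal 0 w) ((if s i then 1 else -1) * h i * u) := by
  set W := fun ω => quantize h (X ω, Z ω)
  have hW : Measurable W := (measurable_quantize h).comp (hXm.prodMk hZm)
  set G : (ι → Bool) → ℝ → ℝ :=
    fun s u => ∏ i, cdf (gaussianReal 0 w) ((if s i then 1 else -1) * h i * u)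
  have hXint : Integrable X μ :=
    (integrable_map_measure aestronglyMeasurable_id hXm.aemeasurable).1
      (hX ▸ (memLp_id_gaussianReal 1).integrable le_rfl)
  have hEX : ∫ ω, X ω ∂μ = 0 := by
    rw [← integral_map (f := fun x => x) hXm.aemeasurable aestronglyMeasurable_id, hX,
      integral_id_gaussianReal]
  have hfiber : ∀ s {φ : ℝ → ℝ}, Integrable φ (gaussianReal 0 v) →
      ∫ ω in W ⁻¹' {s}, φ (X ω) ∂μ = ∫ u, gaussianPDFReal 0 v u * (G s u * φ u) := by
    intro s φ hφ
    rw [setIntegral_quantize_preimage hXm hZm hXZ hw hZ h s (hX ▸ hφ), hX,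
      integral_gaussianReal_eq_integral_smul hv]
    rfl
  have hmass : ∀ s, μ.real (W ⁻¹' {s}) = ∫ u, gaussianPDFReal 0 v u * G s u := by
    intro s
    simpa using hfiber s (integrable_const (1 : ℝ))
  have hfirst : ∀ s, ∫ ω in W ⁻¹' {s}, X ω ∂μ = ∫ u, u * gaussianPDFReal 0 v u * G s u := by
    intro s
    rw [hfiber s (φ := fun x => x) ((memLp_id_gaussianReal 1).integrable le_rfl)]
    exact integral_congr_ae (ae_of_all _ fun u => by ring)
  have hmass_nonneg : ∀ s, 0 ≤ ∫ u, gaussianPDFReal 0 v u * G s u := fun s =>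
    integral_nonneg fun u => mul_nonneg (gaussianPDFReal_nonneg 0 v u)
      (Finset.prod_nonneg fun i _ => cdf_nonneg _ _)
  rw [variance_condExp_comap_of_finite hW hXint, hEX, zero_pow two_ne_zero, sub_zero]
  simp only [hmass, hfirst]
  -- a fiber of mass zero contributes `x / 0 = 0`
  refine (Finset.sum_filter_of_ne fun s _ hs => ?_).symm
  by_contra hpos
  rw [(hmass_nonneg s).antisymm' (not_lt.1 hpos), div_zero] at hs
  exact hs rfl

/-- appendix: variance of the MMSE estimator for the real SIMO channel
with one-bit quantization `Y_i = sgn(h_i X + Z_i)`: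
`Var(E[X|Y]) = Σ_{y ∈ {−1,+1}^p} (∫ u·f(u)·∏ F(yᵢhᵢu) du)²/(∫ f(u)·∏ F(yᵢhᵢu) du)`,
the sum ranging over all `y` with strictly positive denominator. -/
theorem stmt16 {Ω : Type*} {mΩ : MeasurableSpace Ω} (μ : Measure Ω) [IsProbabilityMeasure μ]
    {p : ℕ} (h : Fin p → ℝ) (P : ℝ) (hP : 0 < P)
    (X : Ω → ℝ) (Z : Ω → Fin p → ℝ)
    (hXm : Measurable X) (hZm : Measurable Z)
    (hXZ : IndepFun X Z μ)
    (hX : Measure.map X μ = gaussianReal 0 ⟨P, hP.le⟩)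
    (hZ : Measure.map Z μ = Measure.pi fun _ : Fin p => gaussianReal 0 1)
    (sgn : ℝ → ℝ) (hsgn : ∀ t, sgn t = if 0 ≤ t then 1 else -1)
    (Y : Ω → Fin p → ℝ) (hY : ∀ ω i, Y ω i = sgn (h i * X ω + Z ω i))
    (f F : ℝ → ℝ)
    (hf : ∀ u, f u = (Real.sqrt (2 * Real.pi * P))⁻¹ * Real.exp (-(u ^ 2) / (2 * P)))
    (hF : ∀ u, F u = ∫ t in Set.Iic u, (Real.sqrt (2 * Real.pi))⁻¹ * Real.exp (-(t ^ 2) / 2)) :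
    variance (μ[X|MeasurableSpace.comap Y inferInstance]) μ
      = ∑ s ∈ Finset.univ.filter
          (fun s : Fin p → Bool =>
            0 < ∫ u, f u * ∏ i, F ((if s i then 1 else -1) * h i * u)),
          (∫ u, u * f u * ∏ i, F ((if s i then 1 else -1) * h i * u)) ^ 2
            / ∫ u, f u * ∏ i, F ((if s i then 1 else -1) * h i * u) := by
  obtain rfl : f = gaussianPDFReal 0 ⟨P, hP.le⟩ :=
    funext fun u => (hf u).trans (gaussianPDFReal_zero_apply ⟨P, hP.le⟩ u).symm
  obtain rfl : F = cdf (gaussianReal 0 1) :=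
    funext fun u => by rw [hF, cdf_gaussianReal_zero_one]
  have hYW : Y = (fun s i => if s i then (1 : ℝ) else -1) ∘ fun ω => quantize h (X ω, Z ω) := by
    funext ω i
    by_cases hi : 0 ≤ h i * X ω + Z ω i <;> simp [hY, hsgn, quantize, hi]
  have hcode : Function.Injective fun (s : Fin p → Bool) i => if s i then (1 : ℝ) else -1 :=
    Function.Injective.comp_left (g := fun b : Bool => if b then (1 : ℝ) else -1)
      fun a b => by cases a <;> cases b <;> norm_num
  rw [hYW, MeasurableSpace.comap_comp_of_injective hcode]
  exact variance_condExp_comap_quantize hXm hZm hXZ (ne_of_gt hP) one_ne_zero hX hZ h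
end
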